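/- Given constants B, c > 0 there exists δ ∈ (0,1/2) such that: for every analytic function g on the unit disc 𝔻 satisfying |g'(z)|(1-|z|) ≤ B for all z ∈ 𝔻, for every η ∈ (0,1/2) and every real a satisfying |g'((1-η)e^{ia})|·η > 2c, one has |g'(re^{iθ})| > c/η whenever |r-(1-η)| < δη and |θ-a| < δη. -/

import Mathlib

open Metric Set

/-!
A Bloch-type bound `‖f z‖ (1 - ‖z‖) ≤ B` for `f = g'` gives, by Cauchy's estimate on the disc of
radius `(1 - ‖w‖)/2` about `w`, the bound `‖f' w‖ ≤ 4B/(1 - ‖w‖)²`. Hence `g'` is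
`16B/η²`-Lipschitz on the disc of radius `1 - η/2`, which contains every point `r e^{iθ}` with
`|r - (1-η)|, |θ - a| < δη` once `δ ≤ 1/4`; such a point lies within `2δη` of `(1-η)e^{ia}`, so
for `δ ≤ c/(32B)` the value of `g'` moves by at most `c/η` and stays above `2c/η - c/η`.
-/

/-- The point `r e^{iθ}` of the complex plane. -/
noncomputable def circ (r θ : ℝ) : ℂ := r * Complex.exp (θ * Complex.I)

theorem norm_circ (r θ : ℝ) : ‖circ r θ‖ = |r| := by
  rw [circ, norm_mul, Complex.norm_exp_ofReal_mul_I, mul_one, Complex.norm_real, Real.norm_eq_abs]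

theorem norm_circ_sub_circ_le (r s θ a : ℝ) :
    ‖circ r θ - circ s a‖ ≤ |r - s| + |s| * |θ - a| := by
  have hexp : ‖Complex.exp (θ * Complex.I) - Complex.exp (a * Complex.I)‖ ≤ |θ - a| := by
    have hfactor : Complex.exp (θ * Complex.I) - Complex.exp (a * Complex.I)
        = Complex.exp (a * Complex.I) * (Complex.exp (Complex.I * ↑(θ - a)) - 1) := by
      rw [mul_sub, ← Complex.exp_add]; push_cast; ring_nf
    rw [hfactor, norm_mul, Complex.norm_exp_ofReal_mul_I, one_mul]
    exact Real.norm_exp_I_mul_ofReal_sub_one_le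
  have hsplit : circ r θ - circ s a = ((r - s : ℝ) : ℂ) * Complex.exp (θ * Complex.I)
      + (s : ℂ) * (Complex.exp (θ * Complex.I) - Complex.exp (a * Complex.I)) := by
    rw [circ, circ]; push_cast; ring
  calc ‖circ r θ - circ s a‖
      ≤ |r - s| + |s| * ‖Complex.exp (θ * Complex.I) - Complex.exp (a * Complex.I)‖ := by
        rw [hsplit]
        refine (norm_add_le _ _).trans_eq ?_
        rw [norm_mul, norm_mul, Complex.norm_exp_ofReal_mul_I, mul_one, Complex.norm_real,
          Complex.norm_real, Real.norm_eq_abs, Real.norm_eq_abs]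
    _ ≤ |r - s| + |s| * |θ - a| := by gcongr

section BlochBound

variable {E : Type*} [NormedAddCommGroup E] [NormedSpace ℂ E] {f : ℂ → E} {B : ℝ}

theorem norm_deriv_le_of_norm_mul_one_sub_norm_le (hf : DifferentiableOn ℂ f (ball 0 1))
    (hB : ∀ z ∈ ball (0 : ℂ) 1, ‖f z‖ * (1 - ‖z‖) ≤ B) {w : ℂ} (hw : ‖w‖ < 1) :
    ‖deriv f w‖ ≤ 4 * B / (1 - ‖w‖) ^ 2 := by
  set R := (1 - ‖w‖) / 2 with hR_def
  have hR : 0 < R := by linarith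
  have hnorm : ∀ u ∈ closedBall w R, ‖u‖ ≤ 1 - R := fun u hu => by
    have := norm_le_norm_add_norm_sub' u w
    rw [mem_closedBall, dist_eq_norm] at hu
    linarith
  have hsub : closedBall w R ⊆ ball 0 1 := fun u hu => by
    rw [mem_ball, dist_zero_right]; linarith [hnorm u hu]
  have hd : DiffContOnCl ℂ f (ball w R) :=
    (hf.mono <| (closure_ball w hR.ne').symm ▸ hsub).diffContOnCl
  have hsphere : ∀ u ∈ sphere w R, ‖f u‖ ≤ B / R := fun u hu => by
    have hu' := sphere_subset_closedBall hu
    rw [le_div_iff₀ hR]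
    calc ‖f u‖ * R ≤ ‖f u‖ * (1 - ‖u‖) := by gcongr; linarith [hnorm u hu']
      _ ≤ B := hB u (hsub hu')
  calc ‖deriv f w‖ ≤ B / R / R := Complex.norm_deriv_le_of_forall_mem_sphere_norm_le hR hd hsphere
    _ = 4 * B / (1 - ‖w‖) ^ 2 := by rw [hR_def]; field_simp; ring

theorem norm_sub_le_of_norm_mul_one_sub_norm_le (hf : DifferentiableOn ℂ f (ball 0 1))
    (hB : ∀ z ∈ ball (0 : ℂ) 1, ‖f z‖ * (1 - ‖z‖) ≤ B) {ρ : ℝ} (hρ : 0 < ρ) {z w : ℂ}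
    (hz : ‖z‖ ≤ 1 - ρ) (hw : ‖w‖ ≤ 1 - ρ) :
    ‖f z - f w‖ ≤ 4 * B / ρ ^ 2 * ‖z - w‖ := by
  have hB0 : 0 ≤ B := by
    have := hB 0 (mem_ball_self one_pos)
    rw [norm_zero, sub_zero, mul_one] at this
    exact (norm_nonneg _).trans this
  have hsub : closedBall (0 : ℂ) (1 - ρ) ⊆ ball 0 1 := closedBall_subset_ball (by linarith)
  refine Convex.norm_image_sub_le_of_norm_deriv_le
    (fun u hu => hf.differentiableAt (isOpen_ball.mem_nhds (hsub hu))) (fun u hu => ?_)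
    (convex_closedBall 0 (1 - ρ)) (by simpa using hw) (by simpa using hz)
  have hu : ‖u‖ ≤ 1 - ρ := by simpa using hu
  calc ‖deriv f u‖ ≤ 4 * B / (1 - ‖u‖) ^ 2 :=
        norm_deriv_le_of_norm_mul_one_sub_norm_le hf hB (by linarith)
    _ ≤ 4 * B / ρ ^ 2 := by gcongr; linarith

end BlochBound

/-- Given `B, c > 0` there is `δ ∈ (0,1/2)` such that: for every analytic
`g` on the unit disc with `|g'(z)|(1-|z|) ≤ B` on the disc, every `η ∈ (0,1/2)` and every
real `a` with `|g'((1-η)e^{ia})| η > 2c`, one has `|g'(re^{iθ})| > c/η` whenever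
`|r-(1-η)| < δη` and `|θ-a| < δη`. -/
theorem stmt15 (B c : ℝ) (hB : 0 < B) (hc : 0 < c) :
    ∃ δ : ℝ, δ ∈ Ioo (0:ℝ) (1/2) ∧
      ∀ g : ℂ → ℂ, DifferentiableOn ℂ g (ball (0:ℂ) 1) →
        (∀ z ∈ ball (0:ℂ) 1, ‖deriv g z‖ * (1 - ‖z‖) ≤ B) →
        ∀ η ∈ Ioo (0:ℝ) (1/2), ∀ a : ℝ,
          ‖deriv g (circ (1-η) a)‖ * η > 2*c →
          ∀ r θ : ℝ, |r - (1-η)| < δ*η → |θ - a| < δ*η →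
            ‖deriv g (circ r θ)‖ > c/η := by
  set δ := min (1/4 : ℝ) (c / (32 * B))
  have hδ4 : δ ≤ 1/4 := min_le_left _ _
  have hδc : 32 * B * δ ≤ c := by
    have := min_le_right (1/4 : ℝ) (c / (32 * B)); rwa [le_div_iff₀' (by positivity)] at this
  refine ⟨δ, ⟨lt_min (by norm_num) (by positivity), by linarith⟩, ?_⟩
  rintro g hg hbound η ⟨hη0, hη2⟩ a ha r θ hr hθ
  have hr' := abs_lt.mp hr
  have hdist : ‖circ r θ - circ (1-η) a‖ ≤ 2 * δ * η := by
    have := norm_circ_sub_circ_le r (1-η) θ a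
    rw [abs_of_pos (by linarith : (0:ℝ) < 1 - η)] at this
    nlinarith [abs_nonneg (θ - a)]
  have hlip := norm_sub_le_of_norm_mul_one_sub_norm_le (hg.deriv isOpen_ball) hbound
    (by positivity : 0 < η / 2) (z := circ r θ) (w := circ (1-η) a)
    (by rw [norm_circ, abs_of_pos (by nlinarith)]; nlinarith)
    (by rw [norm_circ, abs_of_pos (by linarith)]; linarith)
  have hclose : ‖deriv g (circ r θ) - deriv g (circ (1-η) a)‖ ≤ c / η := by
    refine hlip.trans ?_
    calc 4 * B / (η / 2) ^ 2 * ‖circ r θ - circ (1-η) a‖ ≤ 4 * B / (η / 2) ^ 2 * (2 * δ * η) := by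
          gcongr
      _ = 32 * B * δ / η := by field_simp; ring
      _ ≤ c / η := by gcongr
  have hbig : 2 * c / η < ‖deriv g (circ (1-η) a)‖ := (div_lt_iff₀ hη0).mpr ha
  have := norm_sub_norm_le (deriv g (circ (1-η) a)) (deriv g (circ r θ))
  rw [norm_sub_rev] at this
  linarith [show 2 * c / η = c / η + c / η by ring]
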